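/- arXiv:2601.10015 — 2 statements merged into one kernel-verified Lean document; each statement's English description precedes it below -/
import Mathlib

section
/- Let X be a nonempty finite type, let k_1, …, k_n be nonnegative real weights with Σ_{i=1}^n k_i = 1, let P_1, …, P_n be probability vectors on X, and let P̄ := Σ_{i=1}^n k_i · P_i be positive. Then a positive probability vector Q on X minimizes the cross-client distillation objective Q ↦ Σ_{i=1}^n k_i · D(P_i ‖ Q) over positive probability vectors if and only if Q minimizes the decoupled objective Q ↦ D(P̄ ‖ Q) over positive probability vectors; in particular the two objectives have the same set of minimizers. -/
open Finset

/-- Discrete KL divergence with the convention that a summand is 0 when `P x = 0`. -/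
noncomputable def KLdiv {X : Type*} [Fintype X] (P Q : X → ℝ) : ℝ :=
  ∑ x, if P x = 0 then 0 else P x * Real.log (P x / Q x)

lemma KLdiv_split {X : Type*} [Fintype X] (P Q : X → ℝ) (hQ : ∀ x, 0 < Q x) :
    KLdiv P Q = (∑ x, if P x = 0 then 0 else P x * Real.log (P x))
      - ∑ x, P x * Real.log (Q x) := by
  unfold KLdiv
  rw [← Finset.sum_sub_distrib]
  apply Finset.sum_congr rfl
  intro x _
  by_cases h : P x = 0
  · simp [h]
  · simp only [h, if_false]
    rw [Real.log_div h (ne_of_gt (hQ x))]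
    ring

theorem cross_client_decoupled_same_minimizers
    {X : Type*} [Fintype X] [Nonempty X] {n : ℕ}
    (k : Fin n → ℝ) (hk : ∀ i, 0 ≤ k i) (hksum : ∑ i, k i = 1)
    (P : Fin n → X → ℝ) (hP : ∀ i x, 0 ≤ P i x) (hPsum : ∀ i, ∑ x, P i x = 1)
    (Pbar : X → ℝ) (hPbar : ∀ x, Pbar x = ∑ i, k i * P i x)
    (hPbarpos : ∀ x, 0 < Pbar x)
    (Q : X → ℝ) (hQpos : ∀ x, 0 < Q x) (hQsum : ∑ x, Q x = 1) :
    (∀ Q' : X → ℝ, (∀ x, 0 < Q' x) → (∑ x, Q' x = 1) →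
        ∑ i, k i * KLdiv (P i) Q ≤ ∑ i, k i * KLdiv (P i) Q')
    ↔
    (∀ Q' : X → ℝ, (∀ x, 0 < Q' x) → (∑ x, Q' x = 1) →
        KLdiv Pbar Q ≤ KLdiv Pbar Q') := by
  -- Key: for positive Q', ∑ i, k i * KLdiv (P i) Q' = A - L(Q') and
  -- KLdiv Pbar Q' = B - L(Q') where L(Q') = ∑ x, Pbar x * log (Q' x).
  set A : ℝ := ∑ i, k i * (∑ x, if P i x = 0 then 0 else P i x * Real.log (P i x)) with hA
  set B : ℝ := ∑ x, if Pbar x = 0 then 0 else Pbar x * Real.log (Pbar x) with hB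
  have hF : ∀ Q' : X → ℝ, (∀ x, 0 < Q' x) →
      ∑ i, k i * KLdiv (P i) Q' = A - ∑ x, Pbar x * Real.log (Q' x) := by
    intro Q' hQ'
    have : ∀ i, k i * KLdiv (P i) Q'
        = k i * (∑ x, if P i x = 0 then 0 else P i x * Real.log (P i x))
          - ∑ x, k i * (P i x * Real.log (Q' x)) := by
      intro i
      rw [KLdiv_split (P i) Q' hQ', mul_sub, Finset.mul_sum, Finset.mul_sum]
    simp_rw [this]
    rw [Finset.sum_sub_distrib, ← hA, Finset.sum_comm]
    congr 1
    apply Finset.sum_congr rfl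
    intro x _
    rw [hPbar x, Finset.sum_mul]
    apply Finset.sum_congr rfl
    intro i _
    ring
  have hG : ∀ Q' : X → ℝ, (∀ x, 0 < Q' x) →
      KLdiv Pbar Q' = B - ∑ x, Pbar x * Real.log (Q' x) := by
    intro Q' hQ'
    rw [KLdiv_split Pbar Q' hQ', hB]
  constructor
  · intro h Q' hQ'pos hQ'sum
    have := h Q' hQ'pos hQ'sum
    rw [hF Q hQpos, hF Q' hQ'pos] at this
    rw [hG Q hQpos, hG Q' hQ'pos]
    linarith
  · intro h Q' hQ'pos hQ'sum
    have := h Q' hQ'pos hQ'sum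
    rw [hG Q hQpos, hG Q' hQ'pos] at this
    rw [hF Q hQpos, hF Q' hQ'pos]
    linarith
end

section
/- Let G be a finite type and δ : G → G → ℝ be symmetric. For all finite subsets A ⊆ B of G and every x ∈ G with x ∉ B, the difference of marginal gains satisfies the identity (f(A ∪ {x}) − f(A)) − (f(B ∪ {x}) − f(B)) = 2 · Σ_{i ∈ B \ A} (−δ(i, x)). -/
/-!
Adding `x` to a removal set `E` deletes the row and the column of `x` from the double sum over
`Eᶜ`; by symmetry the marginal gain is `-δ x x - 2 ∑_{i ∉ insert x E} δ i x`. The diagonal term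
cancels in the difference of two gains, and the two remaining sums differ exactly by the
indices in `B \ A`.
-/

open Finset

/-- The removal-set objective:
`f E = ∑_{i ∈ G \ E} ∑_{j ∈ G \ E} δ i j − ∑_{i ∈ G} ∑_{j ∈ G} δ i j`. -/
def removalObj {G : Type*} [Fintype G] [DecidableEq G] (δ : G → G → ℝ) (E : Finset G) : ℝ :=
  (∑ i ∈ Eᶜ, ∑ j ∈ Eᶜ, δ i j) - ∑ i : G, ∑ j : G, δ i j

theorem Finset.sum_sum_insert_of_symm {α R : Type*} [DecidableEq α] [NonAssocSemiring R]
    {δ : α → α → R} (hsymm : ∀ i j, δ i j = δ j i) {s : Finset α} {x : α} (hx : x ∉ s) :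
    ∑ i ∈ insert x s, ∑ j ∈ insert x s, δ i j
      = δ x x + 2 * ∑ i ∈ s, δ i x + ∑ i ∈ s, ∑ j ∈ s, δ i j := by
  simp only [sum_insert hx, sum_add_distrib, two_mul]
  rw [sum_congr rfl fun j _ => hsymm x j]
  abel

theorem removalObj_insert_sub {G : Type*} [Fintype G] [DecidableEq G] {δ : G → G → ℝ}
    (hsymm : ∀ i j, δ i j = δ j i) {E : Finset G} {x : G} (hx : x ∉ E) :
    removalObj δ (insert x E) - removalObj δ E
      = -δ x x - 2 * ∑ i ∈ (insert x E)ᶜ, δ i x := by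
  have hcompl : Eᶜ = insert x (insert x E)ᶜ := by
    rw [compl_insert, insert_erase (mem_compl.2 hx)]
  rw [removalObj, removalObj, hcompl,
    sum_sum_insert_of_symm hsymm (s := (insert x E)ᶜ) (by simp)]
  ring

theorem Finset.compl_insert_sdiff_compl_insert {α : Type*} [Fintype α] [DecidableEq α]
    {A B : Finset α} {x : α} (hx : x ∉ B) :
    (insert x A)ᶜ \ (insert x B)ᶜ = B \ A := by
  rw [compl_sdiff_compl, insert_sdiff_insert, sdiff_insert_of_notMem hx]

theorem removalObj_marginal_gain_difference
    {G : Type*} [Fintype G] [DecidableEq G] (δ : G → G → ℝ)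
    (hsymm : ∀ i j, δ i j = δ j i)
    (A B : Finset G) (hAB : A ⊆ B) (x : G) (hx : x ∉ B) :
    (removalObj δ (insert x A) - removalObj δ A)
        - (removalObj δ (insert x B) - removalObj δ B)
      = 2 * ∑ i ∈ B \ A, (-(δ i x)) := by
  have hxA : x ∉ A := fun h => hx (hAB h)
  have hsplit : ∑ i ∈ B \ A, δ i x + ∑ i ∈ (insert x B)ᶜ, δ i x
      = ∑ i ∈ (insert x A)ᶜ, δ i x := by
    rw [← compl_insert_sdiff_compl_insert hx]
    exact sum_sdiff (compl_subset_compl.2 (insert_subset_insert x hAB))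
  rw [removalObj_insert_sub hsymm hxA, removalObj_insert_sub hsymm hx, sum_neg_distrib, ← hsplit]
  ring
end
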